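/- arXiv:2512.09250 — 3 statements merged into one kernel-verified Lean document; each statement's English description precedes it below -/
import Mathlib

section
/- Let U = (ρ̄, ω̄, ζ̄) be a staggered variable and V = (ρ, ω, ζ) a centered variable such that: (i) J(V) = 0 (equivalently, f_δ(ρ_j, ω_j, ζ_j) = 0 for every grid index j); (ii) V = I(U); (iii) (div − s_z)(U) = 0, i.e., (ρ̄_{j₀+1,j₁} − ρ̄_{j₀,j₁})/h₀ + (ω̄_{j₀,j₁+1} − ω̄_{j₀,j₁})/h₁ = ζ̄_{j₀,j₁} for all j₀, j₁; and (iv) b(U) = 0, i.e., ρ̄_{0,·} = ρ̄_{N₀,·} = 0 and ω̄_{·,0} = ω̄_{·,N₁} = 0. Then U = 0 and V = 0. -/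
open scoped ENNReal Classical BigOperators

noncomputable section

/-- A centered variable `V = (ρ, ω, ζ)`: three `N₀ × N₁` real arrays on the centered grid. -/
abbrev Cent (N₀ N₁ : ℕ) :=
  (Fin N₀ → Fin N₁ → ℝ) × (Fin N₀ → Fin N₁ → ℝ) × (Fin N₀ → Fin N₁ → ℝ)

/-- A staggered variable `U = (ρ̄, ω̄, ζ̄)` with `ρ̄ ∈ ℝ^{(N₀+1)×N₁}`, `ω̄ ∈ ℝ^{N₀×(N₁+1)}`,
`ζ̄ ∈ ℝ^{N₀×N₁}`. -/
abbrev Stag (N₀ N₁ : ℕ) :=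
  (Fin (N₀ + 1) → Fin N₁ → ℝ) × (Fin N₀ → Fin (N₁ + 1) → ℝ) × (Fin N₀ → Fin N₁ → ℝ)

/-- The Wasserstein–Fisher–Rao infinitesimal cost `f_δ : ℝ × ℝ × ℝ → [0,+∞]`:
`f_δ(ρ,ω,ζ) = (ω² + δ²ζ²)/(2ρ)` if `ρ > 0`, `f_δ(0,0,0) = 0`, and `+∞` otherwise. -/
def fd1 (δ : ℝ) (p : ℝ × ℝ × ℝ) : ℝ≥0∞ :=
  if 0 < p.1 then ENNReal.ofReal ((p.2.1 ^ 2 + δ ^ 2 * p.2.2 ^ 2) / (2 * p.1))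
  else if p = 0 then 0 else ⊤

/-- The discrete WFR cost `J(V) = Σ_j f_δ(ρ_j, ω_j, ζ_j) h₀ h₁`. -/
def Jcost (N₀ N₁ : ℕ) (δ h₀ h₁ : ℝ) (V : Cent N₀ N₁) : ℝ≥0∞ :=
  ∑ j₀ : Fin N₀, ∑ j₁ : Fin N₁,
    fd1 δ (V.1 j₀ j₁, V.2.1 j₀ j₁, V.2.2 j₀ j₁) * ENNReal.ofReal (h₀ * h₁)

/-- The interpolation operator `I(U) = (I_ρ ρ̄, I_ω ω̄, ζ̄)` mapping staggered to centered
variables by midpoint averaging. -/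
def interp (N₀ N₁ : ℕ) (U : Stag N₀ N₁) : Cent N₀ N₁ :=
  (fun j₀ j₁ => (U.1 j₀.castSucc j₁ + U.1 j₀.succ j₁) / 2,
   fun j₀ j₁ => (U.2.1 j₀ j₁.castSucc + U.2.1 j₀ j₁.succ) / 2,
   U.2.2)

/-- The discrete continuity equation `(div − s_z)(U) = 0`:
`(ρ̄_{j₀+1,j₁} − ρ̄_{j₀,j₁})/h₀ + (ω̄_{j₀,j₁+1} − ω̄_{j₀,j₁})/h₁ = ζ̄_{j₀,j₁}`. -/
def DiscCE (N₀ N₁ : ℕ) (h₀ h₁ : ℝ) (U : Stag N₀ N₁) : Prop :=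
  ∀ (j₀ : Fin N₀) (j₁ : Fin N₁),
    (U.1 j₀.succ j₁ - U.1 j₀.castSucc j₁) / h₀
      + (U.2.1 j₀ j₁.succ - U.2.1 j₀ j₁.castSucc) / h₁ = U.2.2 j₀ j₁


/-- **Rigidity of zero-energy paths with zero boundary data.**
With `h₀ = 1/N₀`, `h₁ = L/N₁` and `δ > 0`: if a staggered variable `U = (ρ̄, ω̄, ζ̄)` and a
centered variable `V = (ρ, ω, ζ)` satisfy (i) `J(V) = 0`, (ii) `V = I(U)`,
(iii) the discrete continuity equation `(div − s_z)(U) = 0`, and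
(iv) the zero boundary conditions `b(U) = 0` (i.e. `ρ̄_{0,·} = ρ̄_{N₀,·} = 0` and
`ω̄_{·,0} = ω̄_{·,N₁} = 0`), then `U = 0` and `V = 0`. -/
theorem discrete_zero_energy_rigidity
    (N₀ N₁ : ℕ) (hN₀ : 1 ≤ N₀) (hN₁ : 1 ≤ N₁) (L δ : ℝ) (hL : 0 < L) (hδ : 0 < δ)
    (U : Stag N₀ N₁) (V : Cent N₀ N₁)
    (hJ : Jcost N₀ N₁ δ (1 / N₀) (L / N₁) V = 0)
    (hIV : V = interp N₀ N₁ U)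
    (hCE : DiscCE N₀ N₁ (1 / N₀) (L / N₁) U)
    (hb0 : (∀ j₁, U.1 0 j₁ = 0) ∧ (∀ j₁, U.1 (Fin.last N₀) j₁ = 0) ∧
      (∀ j₀, U.2.1 j₀ 0 = 0) ∧ (∀ j₀, U.2.1 j₀ (Fin.last N₁) = 0)) :
    U = 0 ∧ V = 0 := by
  obtain ⟨hρ0, hρN, hω0, hωN⟩ := hb0
  have h0pos : (0:ℝ) < N₀ := by exact_mod_cast Nat.lt_of_lt_of_le Nat.zero_lt_one hN₀
  have h1pos : (0:ℝ) < N₁ := by exact_mod_cast Nat.lt_of_lt_of_le Nat.zero_lt_one hN₁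
  have hh : (0:ℝ) < (1 / N₀) * (L / N₁) := by positivity
  -- each cost term vanishes
  have hterm : ∀ j₀ j₁, fd1 δ (V.1 j₀ j₁, V.2.1 j₀ j₁, V.2.2 j₀ j₁) = 0 := by
    intro j₀ j₁
    have h1 := (Finset.sum_eq_zero_iff.mp hJ) j₀ (Finset.mem_univ _)
    have h2 := (Finset.sum_eq_zero_iff.mp h1) j₁ (Finset.mem_univ _)
    have hne : ENNReal.ofReal ((1 / (N₀:ℝ)) * (L / N₁)) ≠ 0 :=
      ne_of_gt (ENNReal.ofReal_pos.mpr hh)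
    rcases mul_eq_zero.mp h2 with h | h
    · exact h
    · exact absurd h hne
  -- hence ω and ζ components of V vanish
  have hωζ : ∀ j₀ j₁, V.2.1 j₀ j₁ = 0 ∧ V.2.2 j₀ j₁ = 0 := by
    intro j₀ j₁
    have h := hterm j₀ j₁
    unfold fd1 at h
    split_ifs at h with h1 h2
    · rw [ENNReal.ofReal_eq_zero] at h
      have hd : (0:ℝ) < 2 * V.1 j₀ j₁ := by linarith
      have hnum : V.2.1 j₀ j₁ ^ 2 + δ ^ 2 * V.2.2 j₀ j₁ ^ 2 ≤ 0 := by
        by_contra hc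
        push_neg at hc
        have := div_pos hc hd
        linarith
      have hω : V.2.1 j₀ j₁ ^ 2 = 0 :=
        le_antisymm (by nlinarith [sq_nonneg (V.2.2 j₀ j₁)]) (sq_nonneg _)
      have hζ : V.2.2 j₀ j₁ ^ 2 = 0 :=
        le_antisymm (by nlinarith [sq_nonneg (V.2.1 j₀ j₁), pow_pos hδ 2]) (sq_nonneg _)
      exact ⟨pow_eq_zero_iff two_ne_zero |>.mp hω, pow_eq_zero_iff two_ne_zero |>.mp hζ⟩
    · simp [Prod.ext_iff] at h2
      exact ⟨h2.2.1, h2.2.2⟩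
    · exact absurd h (by simp)
  -- ζ̄ = 0
  have hzbar : ∀ j₀ j₁, U.2.2 j₀ j₁ = 0 := by
    intro j₀ j₁
    have := (hωζ j₀ j₁).2
    rwa [hIV] at this
  -- ω̄ = 0 by induction
  have hwbar : ∀ j₀ j₁, U.2.1 j₀ j₁ = 0 := by
    intro j₀ j₁
    induction j₁ using Fin.induction with
    | zero => exact hω0 j₀
    | succ i ih =>
      have h := (hωζ j₀ i).1
      rw [hIV] at h
      simp only [interp] at h
      linarith
  -- ρ̄ constant in j₀ from CE, hence 0
  have hstep : ∀ (j₀ : Fin N₀) (j₁ : Fin N₁), U.1 j₀.succ j₁ = U.1 j₀.castSucc j₁ := by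
    intro j₀ j₁
    have h := hCE j₀ j₁
    rw [hwbar j₀ j₁.succ, hwbar j₀ j₁.castSucc, hzbar j₀ j₁] at h
    have hne : (1 / (N₀:ℝ)) ≠ 0 := by positivity
    field_simp at h
    rcases mul_eq_zero.mp (show (U.1 j₀.succ j₁ - U.1 j₀.castSucc j₁) * ((N₀:ℝ) * L) = 0 by linarith) with h' | h'
    · linarith
    · exact absurd h' (ne_of_gt (mul_pos h0pos hL))
  have hrbar : ∀ j₀ j₁, U.1 j₀ j₁ = 0 := by
    intro j₀ j₁
    induction j₀ using Fin.induction with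
    | zero => exact hρ0 j₁
    | succ i ih => rw [hstep i j₁]; exact ih
  have hU : U = 0 := by
    refine Prod.ext ?_ (Prod.ext ?_ ?_)
    · funext j₀ j₁; exact hrbar j₀ j₁
    · funext j₀ j₁; exact hwbar j₀ j₁
    · funext j₀ j₁; exact hzbar j₀ j₁
  refine ⟨hU, ?_⟩
  rw [hIV, hU]
  refine Prod.ext ?_ (Prod.ext ?_ ?_) <;> funext j₀ j₁ <;> simp [interp]
end
end

section
/- Define the discrete objective F(U,V) = J(V) + ι_{CE}(U) + ι_{{V=I(U)}}(U,V) + Σ_{i=1}^d ι_{C_i}(V), where ι denotes the convex indicator function (0 on the set, +∞ off it) and CE = {U : (div − s_z)(U) = 0, b(U) = b₀}. If the feasible set of the discrete constrained WFR problem is nonempty, then F is level-bounded: for every c ∈ ℝ, the sublevel set {(U,V) : F(U,V) ≤ c} is bounded. -/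
open scoped ENNReal Classical BigOperators

noncomputable section

/-- The boundary conditions `b(U) = b₀ = (ρ₀, ρ₁, 0, 0)`: prescribed initial and terminal
densities and no-flux spatial boundary conditions for the momentum. -/
def DiscBdry (N₀ N₁ : ℕ) (ρbd0 ρbd1 : Fin N₁ → ℝ) (U : Stag N₀ N₁) : Prop :=
  (∀ j₁, U.1 0 j₁ = ρbd0 j₁) ∧ (∀ j₁, U.1 (Fin.last N₀) j₁ = ρbd1 j₁) ∧
  (∀ j₀, U.2.1 j₀ 0 = 0) ∧ (∀ j₀, U.2.1 j₀ (Fin.last N₁) = 0)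

/-- Membership of a centered variable in a box constraint set `C`:
`ℓ_{j₀} ≤ Σ_{j₁} (H^ρ ρ + H^ω ω + H^ζ ζ) h₁ ≤ u_{j₀}` for all `j₀`, with extended-real
bounds `ℓ ≤ u`. -/
def InBox (N₀ N₁ : ℕ) (h₁ : ℝ) (Hρ Hω Hζ : Fin N₀ → Fin N₁ → ℝ)
    (l u : Fin N₀ → EReal) (V : Cent N₀ N₁) : Prop :=
  ∀ j₀ : Fin N₀,
    l j₀ ≤ (((∑ j₁, (Hρ j₀ j₁ * V.1 j₀ j₁ + Hω j₀ j₁ * V.2.1 j₀ j₁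
            + Hζ j₀ j₁ * V.2.2 j₀ j₁)) * h₁ : ℝ) : EReal) ∧
    (((∑ j₁, (Hρ j₀ j₁ * V.1 j₀ j₁ + Hω j₀ j₁ * V.2.1 j₀ j₁
            + Hζ j₀ j₁ * V.2.2 j₀ j₁)) * h₁ : ℝ) : EReal) ≤ u j₀

/-- The convex indicator function with values in `[0,+∞]`: `0` if the proposition holds,
`+∞` otherwise. -/
def iotaInd (P : Prop) : ℝ≥0∞ := if P then 0 else ⊤

/-- The discrete objective
`F(U,V) = J(V) + ι_{CE}(U) + ι_{{V=I(U)}}(U,V) + Σᵢ ι_{Cᵢ}(V)`, where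
`CE = {U : (div − s_z)(U) = 0, b(U) = b₀}`. -/
def Fobj (N₀ N₁ : ℕ) (δ h₀ h₁ : ℝ) (d : ℕ)
    (Hρ Hω Hζ : Fin d → Fin N₀ → Fin N₁ → ℝ) (l u : Fin d → Fin N₀ → EReal)
    (ρbd0 ρbd1 : Fin N₁ → ℝ) (p : Stag N₀ N₁ × Cent N₀ N₁) : ℝ≥0∞ :=
  Jcost N₀ N₁ δ h₀ h₁ p.2
    + iotaInd (DiscCE N₀ N₁ h₀ h₁ p.1 ∧ DiscBdry N₀ N₁ ρbd0 ρbd1 p.1)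
    + iotaInd (p.2 = interp N₀ N₁ p.1)
    + ∑ i : Fin d, iotaInd (InBox N₀ N₁ h₁ (Hρ i) (Hω i) (Hζ i) (l i) (u i) p.2)

lemma iotaInd_le_ofReal {P : Prop} {c : ℝ} (h : iotaInd P ≤ ENNReal.ofReal c) : P := by
  by_contra hP
  rw [iotaInd, if_neg hP, top_le_iff] at h
  exact ENNReal.ofReal_ne_top h

lemma fin_telescope {n : ℕ} (f : Fin (n + 1) → ℝ) :
    ∑ j : Fin n, (f j.succ - f j.castSucc) = f (Fin.last n) - f 0 := by
  induction n with
  | zero => simp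
  | succ n ih =>
    rw [Fin.sum_univ_castSucc]
    have h := ih (fun j => f j.castSucc)
    have e : ∀ j : Fin n, f j.castSucc.succ - f j.castSucc.castSucc
        = f j.succ.castSucc - f j.castSucc.castSucc := by
      intro j; rw [Fin.succ_castSucc]
    calc (∑ j : Fin n, (f j.castSucc.succ - f j.castSucc.castSucc))
          + (f (Fin.last n).succ - f (Fin.last n).castSucc)
        = (∑ j : Fin n, (f j.succ.castSucc - f j.castSucc.castSucc))
          + (f (Fin.last n).succ - f (Fin.last n).castSucc) := by
          rw [Finset.sum_congr rfl (fun j _ => e j)]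
      _ = (f (Fin.last n).castSucc - f (0 : Fin (n+1)).castSucc)
          + (f (Fin.last n).succ - f (Fin.last n).castSucc) := by rw [h]
      _ = f (Fin.last (n+1)) - f 0 := by
          rw [Fin.succ_last, Fin.castSucc_zero]
          simp only [Nat.succ_eq_add_one]
          ring

lemma fd1_bound {δ c' ρ ω ζ : ℝ} (hc' : 0 ≤ c')
    (h : fd1 δ (ρ, ω, ζ) ≤ ENNReal.ofReal c') :
    0 ≤ ρ ∧ ω ^ 2 + δ ^ 2 * ζ ^ 2 ≤ 2 * c' * ρ := by
  rw [fd1] at h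
  dsimp only at h
  split_ifs at h with h1 h2
  · have hle := (ENNReal.ofReal_le_ofReal_iff hc').1 h
    refine ⟨h1.le, ?_⟩
    rw [div_le_iff₀ (by linarith : (0:ℝ) < 2 * ρ)] at hle
    nlinarith
  · obtain ⟨e1, e2, e3⟩ : ρ = 0 ∧ ω = 0 ∧ ζ = 0 := by
      simpa [Prod.ext_iff] using h2
    subst e1; subst e2; subst e3; norm_num
  · rw [top_le_iff] at h
    exact absurd h ENNReal.ofReal_ne_top

lemma abs_le_of_sq_le {x a : ℝ} (ha : 0 ≤ a) (h : x ^ 2 ≤ a ^ 2) : |x| ≤ a := by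
  nlinarith [sq_abs x, abs_nonneg x]


set_option maxHeartbeats 1000000 in
/-- **Level-boundedness of the discrete objective.**
With `h₀ = 1/N₀`, `h₁ = L/N₁`, `δ > 0` and bounds `ℓᵢ ≤ uᵢ`: if the feasible set of the
discrete constrained WFR problem is nonempty (i.e. `F` takes a finite value somewhere), then
`F` is level-bounded: every sublevel set `{(U,V) : F(U,V) ≤ c}`, `c ∈ ℝ`, is bounded. -/
theorem discrete_objective_levelBounded
    (N₀ N₁ : ℕ) (hN₀ : 1 ≤ N₀) (hN₁ : 1 ≤ N₁) (L δ : ℝ) (hL : 0 < L) (hδ : 0 < δ)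
    (d : ℕ) (Hρ Hω Hζ : Fin d → Fin N₀ → Fin N₁ → ℝ) (l u : Fin d → Fin N₀ → EReal)
    (hlu : ∀ i j₀, l i j₀ ≤ u i j₀) (ρbd0 ρbd1 : Fin N₁ → ℝ)
    (hfeas : ∃ p : Stag N₀ N₁ × Cent N₀ N₁,
      Fobj N₀ N₁ δ (1 / N₀) (L / N₁) d Hρ Hω Hζ l u ρbd0 ρbd1 p ≠ ⊤) :
    ∀ c : ℝ, Bornology.IsBounded
      {p : Stag N₀ N₁ × Cent N₀ N₁ |
        Fobj N₀ N₁ δ (1 / N₀) (L / N₁) d Hρ Hω Hζ l u ρbd0 ρbd1 p ≤ ENNReal.ofReal c} := by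
  intro c
  have hN₀pos : (0:ℝ) < (N₀:ℝ) := by exact_mod_cast hN₀
  have hN₁pos : (0:ℝ) < (N₁:ℝ) := by exact_mod_cast hN₁
  set h₀ : ℝ := 1 / (N₀:ℝ) with hh₀def
  set h₁ : ℝ := L / (N₁:ℝ) with hh₁def
  have hh₀ : 0 < h₀ := by rw [hh₀def]; positivity
  have hh₁ : 0 < h₁ := div_pos hL hN₁pos
  set c' : ℝ := max c 0 / (h₀ * h₁) with hc'def
  have hc' : 0 ≤ c' := div_nonneg (le_max_right c 0) (mul_pos hh₀ hh₁).le
  set a : ℝ := c' * h₀ / δ ^ 2 with hadef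
  have ha : 0 ≤ a := div_nonneg (mul_nonneg hc' hh₀.le) (sq_nonneg δ)
  set b : ℝ := 1 / (2 * h₀) with hbdef
  have hb : 0 ≤ b := by rw [hbdef]; positivity
  have hb0 : h₀ * b = 1 / 2 := by rw [hbdef]; field_simp
  set D : ℝ := 2 * h₀ * (N₁:ℝ) * a with hDdef
  have hD : 0 ≤ D := mul_nonneg (by positivity) ha
  set m0abs : ℝ := |∑ j₁, ρbd0 j₁| with hm0def
  set M' : ℝ := 2 ^ N₀ * (m0abs + D) with hM'def
  have hM'0 : 0 ≤ M' := mul_nonneg (by positivity) (add_nonneg (abs_nonneg _) hD)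
  set Rω : ℝ := max 1 (2 * c' * M') with hRωdef
  set Rζ : ℝ := max 1 (2 * c' * M' / δ ^ 2) with hRζdef
  set Rc : ℝ := max M' (max Rω Rζ) with hRcdef
  have hRc0 : 0 ≤ Rc := le_trans hM'0 (le_max_left _ _)
  set C0 : ℝ := ∑ j₁, |ρbd0 j₁| with hC0def
  have hC0 : 0 ≤ C0 := Finset.sum_nonneg (fun _ _ => abs_nonneg _)
  set R : ℝ := C0 + 2 * Rc * (N₀:ℝ) + 2 * Rc * (N₁:ℝ) + Rc with hRdef
  have hRN₀ : (0:ℝ) ≤ 2 * Rc * (N₀:ℝ) := by positivity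
  have hRN₁ : (0:ℝ) ≤ 2 * Rc * (N₁:ℝ) := by positivity
  have hR0 : 0 ≤ R := by rw [hRdef]; linarith
  rw [isBounded_iff_forall_norm_le]
  refine ⟨R, ?_⟩
  rintro ⟨U, V⟩ hp
  simp only [Set.mem_setOf_eq, Fobj] at hp
  have hJ : Jcost N₀ N₁ δ h₀ h₁ V ≤ ENNReal.ofReal c :=
    ((le_self_add.trans le_self_add).trans le_self_add).trans hp
  have hCEB := iotaInd_le_ofReal (((le_add_self.trans le_self_add).trans le_self_add).trans hp)
  obtain ⟨hCE, hB0, hB1, hw0, hwN⟩ := hCEB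
  have hVI : V = interp N₀ N₁ U :=
    iotaInd_le_ofReal ((le_add_self.trans le_self_add).trans hp)
  have hVρ : ∀ j₀ j₁, V.1 j₀ j₁ = (U.1 j₀.castSucc j₁ + U.1 j₀.succ j₁) / 2 := by
    intro j₀ j₁; rw [hVI]; rfl
  have hVω : ∀ j₀ j₁, V.2.1 j₀ j₁ = (U.2.1 j₀ j₁.castSucc + U.2.1 j₀ j₁.succ) / 2 := by
    intro j₀ j₁; rw [hVI]; rfl
  have hVζ : ∀ j₀ j₁, V.2.2 j₀ j₁ = U.2.2 j₀ j₁ := by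
    intro j₀ j₁; rw [hVI]; rfl
  -- pointwise cost bound
  have hne : ENNReal.ofReal (h₀ * h₁) ≠ 0 := (ENNReal.ofReal_pos.mpr (mul_pos hh₀ hh₁)).ne'
  have hc'eq : ENNReal.ofReal c ≤ ENNReal.ofReal c' * ENNReal.ofReal (h₀ * h₁) := by
    rw [← ENNReal.ofReal_mul hc']
    apply ENNReal.ofReal_le_ofReal
    rw [hc'def, div_mul_cancel₀ _ (mul_pos hh₀ hh₁).ne']
    exact le_max_left c 0
  have hpt : ∀ j₀ j₁, 0 ≤ V.1 j₀ j₁ ∧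
      (V.2.1 j₀ j₁) ^ 2 + δ ^ 2 * (V.2.2 j₀ j₁) ^ 2 ≤ 2 * c' * V.1 j₀ j₁ := by
    intro j₀ j₁
    apply fd1_bound hc'
    have hX : fd1 δ (V.1 j₀ j₁, V.2.1 j₀ j₁, V.2.2 j₀ j₁) * ENNReal.ofReal (h₀ * h₁)
        ≤ ENNReal.ofReal c' * ENNReal.ofReal (h₀ * h₁) := by
      refine le_trans (le_trans ?_ hJ) hc'eq
      rw [Jcost]
      refine le_trans (Finset.single_le_sum (f := fun j₁' : Fin N₁ =>
        fd1 δ (V.1 j₀ j₁', V.2.1 j₀ j₁', V.2.2 j₀ j₁') * ENNReal.ofReal (h₀ * h₁))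
        (fun i _ => zero_le) (Finset.mem_univ j₁)) ?_
      exact Finset.single_le_sum (f := fun j₀' : Fin N₀ => ∑ j₁' : Fin N₁,
        fd1 δ (V.1 j₀' j₁', V.2.1 j₀' j₁', V.2.2 j₀' j₁') * ENNReal.ofReal (h₀ * h₁))
        (fun i _ => zero_le) (Finset.mem_univ j₀)
    exact (ENNReal.mul_le_mul_iff_left hne ENNReal.ofReal_ne_top).1 hX
  -- mass recursion
  have hm : ∀ j₀ : Fin N₀, (∑ j₁, U.1 j₀.succ j₁)
      = (∑ j₁, U.1 j₀.castSucc j₁) + h₀ * ∑ j₁, V.2.2 j₀ j₁ := by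
    intro j₀
    have htel : ∑ j₁ : Fin N₁, (U.2.1 j₀ j₁.succ - U.2.1 j₀ j₁.castSucc) = 0 := by
      rw [fin_telescope (fun j₁ => U.2.1 j₀ j₁), hwN j₀, hw0 j₀]; ring
    have hptCE : ∀ j₁ : Fin N₁, U.1 j₀.succ j₁ - U.1 j₀.castSucc j₁
        = h₀ * V.2.2 j₀ j₁ - (h₀ / h₁) * (U.2.1 j₀ j₁.succ - U.2.1 j₀ j₁.castSucc) := by
      intro j₁
      have hce := hCE j₀ j₁
      rw [hVζ]
      field_simp at hce ⊢
      linear_combination hce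
    have hsum : ∑ j₁, (U.1 j₀.succ j₁ - U.1 j₀.castSucc j₁)
        = h₀ * ∑ j₁, V.2.2 j₀ j₁
          - (h₀ / h₁) * ∑ j₁ : Fin N₁, (U.2.1 j₀ j₁.succ - U.2.1 j₀ j₁.castSucc) := by
      rw [Finset.sum_congr rfl (fun j₁ _ => hptCE j₁), Finset.sum_sub_distrib,
        ← Finset.mul_sum, ← Finset.mul_sum]
    rw [htel] at hsum
    rw [Finset.sum_sub_distrib] at hsum
    linarith
  have hVsum : ∀ j₀ : Fin N₀, ∑ j₁, V.1 j₀ j₁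
      = ((∑ j₁, U.1 j₀.castSucc j₁) + ∑ j₁, U.1 j₀.succ j₁) / 2 := by
    intro j₀
    calc ∑ j₁, V.1 j₀ j₁
        = ∑ j₁, (U.1 j₀.castSucc j₁ + U.1 j₀.succ j₁) / 2 :=
          Finset.sum_congr rfl (fun j₁ _ => hVρ j₀ j₁)
      _ = (∑ j₁, (U.1 j₀.castSucc j₁ + U.1 j₀.succ j₁)) / 2 := by rw [Finset.sum_div]
      _ = _ := by rw [Finset.sum_add_distrib]
  -- AM-GM bound on ζ
  have hζpt : ∀ j₀ j₁, |V.2.2 j₀ j₁| ≤ a + b * V.1 j₀ j₁ := by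
    intro j₀ j₁
    obtain ⟨hρ0, hsq⟩ := hpt j₀ j₁
    have h4ab : 2 * c' = 4 * a * b * δ ^ 2 := by
      rw [hadef, hbdef]
      field_simp
      ring
    have hδ2 : 0 < δ ^ 2 := by positivity
    apply abs_le_of_sq_le (by nlinarith [mul_nonneg hb hρ0] : 0 ≤ a + b * V.1 j₀ j₁)
    have e : 2 * c' * V.1 j₀ j₁ = 4 * a * b * δ ^ 2 * V.1 j₀ j₁ := by rw [h4ab]
    have hz : δ ^ 2 * (V.2.2 j₀ j₁) ^ 2 ≤ 4 * a * b * δ ^ 2 * V.1 j₀ j₁ := by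
      nlinarith [sq_nonneg (V.2.1 j₀ j₁)]
    have h1 : δ ^ 2 * (V.2.2 j₀ j₁) ^ 2 ≤ δ ^ 2 * (a + b * V.1 j₀ j₁) ^ 2 := by
      nlinarith [sq_nonneg (a - b * V.1 j₀ j₁), hδ2.le]
    exact le_of_mul_le_mul_left h1 hδ2
  have hζsum : ∀ j₀ : Fin N₀, |∑ j₁, V.2.2 j₀ j₁| ≤ (N₁:ℝ) * a + b * ∑ j₁, V.1 j₀ j₁ := by
    intro j₀
    calc |∑ j₁, V.2.2 j₀ j₁| ≤ ∑ j₁, |V.2.2 j₀ j₁| := Finset.abs_sum_le_sum_abs _ _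
      _ ≤ ∑ j₁, (a + b * V.1 j₀ j₁) := Finset.sum_le_sum (fun j₁ _ => hζpt j₀ j₁)
      _ = (N₁:ℝ) * a + b * ∑ j₁, V.1 j₀ j₁ := by
          rw [Finset.sum_add_distrib, Finset.sum_const, ← Finset.mul_sum]
          simp [Finset.card_univ, nsmul_eq_mul]
  -- discrete Gronwall
  have hmass : ∀ j : Fin (N₀ + 1), |∑ j₁, U.1 j j₁| ≤ M' := by
    have key : ∀ j : Fin (N₀ + 1), |∑ j₁, U.1 j j₁| + D ≤ 2 ^ (j:ℕ) * (m0abs + D) := by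
      intro j
      induction j using Fin.induction with
      | zero =>
        have h0 : (∑ j₁, U.1 0 j₁) = ∑ j₁, ρbd0 j₁ :=
          Finset.sum_congr rfl (fun j₁ _ => hB0 j₁)
        rw [h0]
        simp [hm0def]
      | succ j ih =>
        have h1 := hm j
        have h2 := hζsum j
        rw [hVsum j] at h2
        have habs : |∑ j₁, U.1 j.succ j₁|
            ≤ |∑ j₁, U.1 j.castSucc j₁| + h₀ * |∑ j₁, V.2.2 j j₁| := by
          rw [h1]
          refine (abs_add_le _ _).trans ?_
          rw [abs_mul, abs_of_pos hh₀]
        have hmm' : (∑ j₁, U.1 j.castSucc j₁) + ∑ j₁, U.1 j.succ j₁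
            ≤ |∑ j₁, U.1 j.castSucc j₁| + |∑ j₁, U.1 j.succ j₁| :=
          add_le_add (le_abs_self _) (le_abs_self _)
        have h4 := mul_le_mul_of_nonneg_left h2 hh₀.le
        have h5 : h₀ * ((N₁:ℝ) * a
              + b * (((∑ j₁, U.1 j.castSucc j₁) + ∑ j₁, U.1 j.succ j₁) / 2))
            = h₀ * ((N₁:ℝ) * a)
              + (1/4) * ((∑ j₁, U.1 j.castSucc j₁) + ∑ j₁, U.1 j.succ j₁) := by
          linear_combination (((∑ j₁, U.1 j.castSucc j₁) + ∑ j₁, U.1 j.succ j₁) / 2) * hb0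
        have hD2 : h₀ * ((N₁:ℝ) * a) = D / 2 := by rw [hDdef]; ring
        have hstep : |∑ j₁, U.1 j.succ j₁| ≤ 2 * |∑ j₁, U.1 j.castSucc j₁| + D := by
          have := abs_nonneg (∑ j₁, U.1 j.castSucc j₁)
          have := abs_nonneg (∑ j₁, U.1 j.succ j₁)
          linarith [habs, h4, hmm']
        calc |∑ j₁, U.1 j.succ j₁| + D ≤ 2 * (|∑ j₁, U.1 j.castSucc j₁| + D) := by linarith
          _ ≤ 2 * (2 ^ ((j.castSucc : Fin (N₀+1)) : ℕ) * (m0abs + D)) := by linarith [ih]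
          _ = 2 ^ ((j.succ : Fin (N₀+1)) : ℕ) * (m0abs + D) := by
              rw [Fin.coe_castSucc, Fin.val_succ, pow_succ]; ring
    intro j
    have h1 := key j
    have h2 : (2:ℝ) ^ (j:ℕ) * (m0abs + D) ≤ 2 ^ N₀ * (m0abs + D) := by
      apply mul_le_mul_of_nonneg_right _ (add_nonneg (abs_nonneg _) hD)
      exact pow_le_pow_right₀ (by norm_num) (Fin.is_le j)
    rw [hM'def]; linarith
  -- centered bounds
  have hρc : ∀ j₀ j₁, |V.1 j₀ j₁| ≤ M' := by
    intro j₀ j₁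
    have h1 : V.1 j₀ j₁ ≤ ∑ j₁', V.1 j₀ j₁' :=
      Finset.single_le_sum (fun j _ => (hpt j₀ j).1) (Finset.mem_univ j₁)
    have h2 : ∑ j₁', V.1 j₀ j₁' ≤ M' := by
      rw [hVsum j₀]
      have l1 := (le_abs_self _).trans (hmass j₀.castSucc)
      have l2 := (le_abs_self _).trans (hmass j₀.succ)
      linarith
    rw [abs_of_nonneg (hpt j₀ j₁).1]; linarith
  have hωc : ∀ j₀ j₁, |V.2.1 j₀ j₁| ≤ Rω := by
    intro j₀ j₁
    obtain ⟨hρ0, hsq⟩ := hpt j₀ j₁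
    have hx : V.1 j₀ j₁ ≤ M' := (le_abs_self _).trans (hρc j₀ j₁)
    have hω2 : (V.2.1 j₀ j₁) ^ 2 ≤ 2 * c' * M' := by
      nlinarith [sq_nonneg (V.2.2 j₀ j₁), mul_nonneg hc' (sub_nonneg.2 hx)]
    rcases le_or_gt |V.2.1 j₀ j₁| 1 with h | h
    · exact h.trans (le_max_left _ _)
    · have h1 : |V.2.1 j₀ j₁| ≤ |V.2.1 j₀ j₁| ^ 2 := by nlinarith [abs_nonneg (V.2.1 j₀ j₁)]
      refine h1.trans (le_trans ?_ (le_max_right _ _))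
      rw [sq_abs]; exact hω2
  have hζc : ∀ j₀ j₁, |V.2.2 j₀ j₁| ≤ Rζ := by
    intro j₀ j₁
    obtain ⟨hρ0, hsq⟩ := hpt j₀ j₁
    have hδ2 : 0 < δ ^ 2 := by positivity
    have hx : V.1 j₀ j₁ ≤ M' := (le_abs_self _).trans (hρc j₀ j₁)
    have hζ2 : (V.2.2 j₀ j₁) ^ 2 ≤ 2 * c' * M' / δ ^ 2 := by
      rw [le_div_iff₀ hδ2]
      nlinarith [sq_nonneg (V.2.1 j₀ j₁), mul_nonneg hc' (sub_nonneg.2 hx)]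
    rcases le_or_gt |V.2.2 j₀ j₁| 1 with h | h
    · exact h.trans (le_max_left _ _)
    · have h1 : |V.2.2 j₀ j₁| ≤ |V.2.2 j₀ j₁| ^ 2 := by nlinarith [abs_nonneg (V.2.2 j₀ j₁)]
      refine h1.trans (le_trans ?_ (le_max_right _ _))
      rw [sq_abs]; exact hζ2
  have hVb1 : ∀ j₀ j₁, |V.1 j₀ j₁| ≤ Rc := fun j₀ j₁ => (hρc j₀ j₁).trans (le_max_left _ _)
  have hVb2 : ∀ j₀ j₁, |V.2.1 j₀ j₁| ≤ Rc := fun j₀ j₁ =>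
    (hωc j₀ j₁).trans ((le_max_left _ _).trans (le_max_right _ _))
  have hVb3 : ∀ j₀ j₁, |V.2.2 j₀ j₁| ≤ Rc := fun j₀ j₁ =>
    (hζc j₀ j₁).trans ((le_max_right _ _).trans (le_max_right _ _))
  -- staggered bounds
  have hUρ : ∀ (j : Fin (N₀ + 1)) (j₁ : Fin N₁), |U.1 j j₁| ≤ C0 + 2 * Rc * ((j:ℕ):ℝ) := by
    intro j
    induction j using Fin.induction with
    | zero =>
      intro j₁
      rw [hB0 j₁]
      have h1 : |ρbd0 j₁| ≤ C0 :=
        Finset.single_le_sum (fun i _ => abs_nonneg (ρbd0 i)) (Finset.mem_univ j₁)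
      simpa using h1
    | succ j ih =>
      intro j₁
      simp only [Fin.coe_castSucc] at ih
      have he : U.1 j.succ j₁ = 2 * V.1 j j₁ - U.1 j.castSucc j₁ := by
        rw [hVρ j j₁]; ring
      rw [he]
      have h1 : |2 * V.1 j j₁ - U.1 j.castSucc j₁| ≤ 2 * |V.1 j j₁| + |U.1 j.castSucc j₁| := by
        calc |2 * V.1 j j₁ - U.1 j.castSucc j₁|
            = |2 * V.1 j j₁ + -(U.1 j.castSucc j₁)| := by rw [sub_eq_add_neg]
          _ ≤ |2 * V.1 j j₁| + |-(U.1 j.castSucc j₁)| := abs_add_le _ _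
          _ = 2 * |V.1 j j₁| + |U.1 j.castSucc j₁| := by rw [abs_neg, abs_mul, abs_two]
      have h2 := ih j₁
      have h3 := hVb1 j j₁
      rw [Fin.val_succ]
      push_cast
      linarith
  have hUω : ∀ (j₁ : Fin (N₁ + 1)) (j₀ : Fin N₀), |U.2.1 j₀ j₁| ≤ 2 * Rc * ((j₁:ℕ):ℝ) := by
    intro j₁
    induction j₁ using Fin.induction with
    | zero =>
      intro j₀
      rw [hw0 j₀]
      simp
    | succ j ih =>
      intro j₀
      simp only [Fin.coe_castSucc] at ih
      have he : U.2.1 j₀ j.succ = 2 * V.2.1 j₀ j - U.2.1 j₀ j.castSucc := by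
        rw [hVω j₀ j]; ring
      rw [he]
      have h1 : |2 * V.2.1 j₀ j - U.2.1 j₀ j.castSucc|
          ≤ 2 * |V.2.1 j₀ j| + |U.2.1 j₀ j.castSucc| := by
        calc |2 * V.2.1 j₀ j - U.2.1 j₀ j.castSucc|
            = |2 * V.2.1 j₀ j + -(U.2.1 j₀ j.castSucc)| := by rw [sub_eq_add_neg]
          _ ≤ |2 * V.2.1 j₀ j| + |-(U.2.1 j₀ j.castSucc)| := abs_add_le _ _
          _ = 2 * |V.2.1 j₀ j| + |U.2.1 j₀ j.castSucc| := by rw [abs_neg, abs_mul, abs_two]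
      have h2 := ih j₀
      have h3 := hVb2 j₀ j
      rw [Fin.val_succ]
      push_cast
      linarith
  -- assemble
  have hUρR : ∀ (j : Fin (N₀ + 1)) (j₁ : Fin N₁), |U.1 j j₁| ≤ R := by
    intro j j₁
    refine (hUρ j j₁).trans ?_
    have hj : ((j:ℕ):ℝ) ≤ (N₀:ℝ) := by exact_mod_cast Fin.is_le j
    have h1 : 2 * Rc * ((j:ℕ):ℝ) ≤ 2 * Rc * (N₀:ℝ) :=
      mul_le_mul_of_nonneg_left hj (by linarith)
    rw [hRdef]; linarith
  have hUωR : ∀ (j₀ : Fin N₀) (j₁ : Fin (N₁ + 1)), |U.2.1 j₀ j₁| ≤ R := by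
    intro j₀ j₁
    refine (hUω j₁ j₀).trans ?_
    have hj : ((j₁:ℕ):ℝ) ≤ (N₁:ℝ) := by exact_mod_cast Fin.is_le j₁
    have h1 : 2 * Rc * ((j₁:ℕ):ℝ) ≤ 2 * Rc * (N₁:ℝ) :=
      mul_le_mul_of_nonneg_left hj (by linarith)
    rw [hRdef]; linarith
  have hRcR : Rc ≤ R := by rw [hRdef]; linarith
  have hUζR : ∀ j₀ j₁, |U.2.2 j₀ j₁| ≤ R := by
    intro j₀ j₁
    rw [← hVζ j₀ j₁]
    exact (hVb3 j₀ j₁).trans hRcR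
  refine norm_prod_le_iff.mpr ⟨norm_prod_le_iff.mpr ⟨?_, norm_prod_le_iff.mpr ⟨?_, ?_⟩⟩,
    norm_prod_le_iff.mpr ⟨?_, norm_prod_le_iff.mpr ⟨?_, ?_⟩⟩⟩
  · rw [pi_norm_le_iff_of_nonneg hR0]; intro j
    rw [pi_norm_le_iff_of_nonneg hR0]; intro j₁
    rw [Real.norm_eq_abs]; exact hUρR j j₁
  · rw [pi_norm_le_iff_of_nonneg hR0]; intro j₀
    rw [pi_norm_le_iff_of_nonneg hR0]; intro j₁
    rw [Real.norm_eq_abs]; exact hUωR j₀ j₁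
  · rw [pi_norm_le_iff_of_nonneg hR0]; intro j₀
    rw [pi_norm_le_iff_of_nonneg hR0]; intro j₁
    rw [Real.norm_eq_abs]; exact hUζR j₀ j₁
  · rw [pi_norm_le_iff_of_nonneg hR0]; intro j₀
    rw [pi_norm_le_iff_of_nonneg hR0]; intro j₁
    rw [Real.norm_eq_abs]; exact (hVb1 j₀ j₁).trans hRcR
  · rw [pi_norm_le_iff_of_nonneg hR0]; intro j₀
    rw [pi_norm_le_iff_of_nonneg hR0]; intro j₁
    rw [Real.norm_eq_abs]; exact (hVb2 j₀ j₁).trans hRcR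
  · rw [pi_norm_le_iff_of_nonneg hR0]; intro j₀
    rw [pi_norm_le_iff_of_nonneg hR0]; intro j₁
    rw [Real.norm_eq_abs]; exact (hVb3 j₀ j₁).trans hRcR
end
end

section
/- Let f : ℝ^d → [0,+∞] be a Borel measurable, positively 1-homogeneous function (f(s·x) = s·f(x) for all s > 0 and f(0) = 0). Let μ = (μ₁,…,μ_d) be a d-tuple of finite signed Borel measures on a measurable space X, and let λ₁, λ₂ be nonnegative σ-finite measures on X such that each μ_k is absolutely continuous with respect to λ₁ and with respect to λ₂. Then ∫_X f(dμ/dλ₁) dλ₁ = ∫_X f(dμ/dλ₂) dλ₂, where dμ/dλ denotes the ℝ^d-valued Radon–Nikodym derivative (dμ₁/dλ,…,dμ_d/dλ). -/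
open MeasureTheory
open scoped ENNReal

lemma vac_trans {X : Type*} [MeasurableSpace X] (s : SignedMeasure X)
    {lam₁ lam : Measure X} (h : s ≪ᵥ lam₁.toENNRealVectorMeasure) (hl : lam₁ ≪ lam) :
    s ≪ᵥ lam.toENNRealVectorMeasure := by
  refine VectorMeasure.AbsolutelyContinuous.mk fun S hS hS0 => ?_
  rw [Measure.toENNRealVectorMeasure_apply_measurable hS] at hS0
  exact h (by rw [Measure.toENNRealVectorMeasure_apply_measurable hS]; exact hl hS0)

lemma chain {X : Type*} [MeasurableSpace X] (s : SignedMeasure X)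
    {lam₁ lam : Measure X} [SigmaFinite lam₁] [SigmaFinite lam]
    (h : s ≪ᵥ lam₁.toENNRealVectorMeasure) (hl : lam₁ ≪ lam) :
    s.rnDeriv lam =ᵐ[lam] fun x => (lam₁.rnDeriv lam x).toReal • s.rnDeriv lam₁ x := by
  refine Integrable.ae_eq_of_withDensityᵥ_eq (s.integrable_rnDeriv lam)
    ((integrable_rnDeriv_smul_iff hl).mpr (s.integrable_rnDeriv lam₁)) ?_
  rw [SignedMeasure.withDensityᵥ_rnDeriv_eq s lam (vac_trans s h hl),
    withDensityᵥ_rnDeriv_smul hl (s.integrable_rnDeriv lam₁),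
    SignedMeasure.withDensityᵥ_rnDeriv_eq s lam₁ h]

lemma half {X : Type*} [MeasurableSpace X] {d : ℕ}
    (f : (Fin d → ℝ) → ℝ≥0∞) (hf : Measurable f)
    (hhom : ∀ s : ℝ, 0 < s → ∀ x : Fin d → ℝ, f (s • x) = ENNReal.ofReal s * f x)
    (hf0 : f 0 = 0)
    (μ : Fin d → SignedMeasure X)
    {lam₁ lam : Measure X} [SigmaFinite lam₁] [SigmaFinite lam]
    (h : ∀ k, μ k ≪ᵥ lam₁.toENNRealVectorMeasure) (hl : lam₁ ≪ lam) :
    ∫⁻ x, f (fun k => (μ k).rnDeriv lam x) ∂lam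
      = ∫⁻ x, f (fun k => (μ k).rnDeriv lam₁ x) ∂lam₁ := by
  have hmeas : Measurable fun x => f (fun k => (μ k).rnDeriv lam₁ x) :=
    hf.comp (measurable_pi_lambda _ fun k => (μ k).measurable_rnDeriv lam₁)
  rw [← lintegral_rnDeriv_mul hl hmeas.aemeasurable]
  refine lintegral_congr_ae ?_
  have hch : ∀ᵐ x ∂lam, ∀ k, (μ k).rnDeriv lam x
      = (lam₁.rnDeriv lam x).toReal • (μ k).rnDeriv lam₁ x :=
    ae_all_iff.mpr fun k => chain (μ k) (h k) hl
  filter_upwards [hch, Measure.rnDeriv_lt_top lam₁ lam] with x hx hlt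
  have hvec : (fun k => (μ k).rnDeriv lam x)
      = (lam₁.rnDeriv lam x).toReal • fun k => (μ k).rnDeriv lam₁ x := by
    funext k; exact hx k
  rw [hvec]
  rcases eq_or_lt_of_le (ENNReal.toReal_nonneg (a := lam₁.rnDeriv lam x)) with h0 | hpos
  · have : lam₁.rnDeriv lam x = 0 := by
      simpa [← h0] using (ENNReal.toReal_eq_zero_iff _).mp h0.symm |>.resolve_right hlt.ne
    simp [this, ← h0, hf0]
  · rw [hhom _ hpos, ENNReal.ofReal_toReal hlt.ne]

/-- **The cost `∫ f(dμ/dλ) dλ` does not depend on the dominating measure.**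
Let `f : ℝ^d → [0,+∞]` be Borel measurable and positively 1-homogeneous
(`f(s·x) = s·f(x)` for `s > 0`, and `f(0) = 0`).  Let `μ = (μ₁,…,μ_d)` be a `d`-tuple of
finite signed Borel measures on `X` and let `λ₁, λ₂` be nonnegative σ-finite measures such
that each `μ_k` is absolutely continuous with respect to both.  Then
`∫ f(dμ/dλ₁) dλ₁ = ∫ f(dμ/dλ₂) dλ₂`, where `dμ/dλ` is the `ℝ^d`-valued tuple of
Radon–Nikodym derivatives. -/
theorem lintegral_homogeneous_rnDeriv_indep_of_dominating
    {X : Type*} [MeasurableSpace X] (d : ℕ)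
    (f : (Fin d → ℝ) → ℝ≥0∞) (hf : Measurable f)
    (hhom : ∀ s : ℝ, 0 < s → ∀ x : Fin d → ℝ, f (s • x) = ENNReal.ofReal s * f x)
    (hf0 : f 0 = 0)
    (μ : Fin d → SignedMeasure X)
    (lam₁ lam₂ : Measure X) [SigmaFinite lam₁] [SigmaFinite lam₂]
    (h₁ : ∀ k, μ k ≪ᵥ lam₁.toENNRealVectorMeasure)
    (h₂ : ∀ k, μ k ≪ᵥ lam₂.toENNRealVectorMeasure) :
    ∫⁻ x, f (fun k => (μ k).rnDeriv lam₁ x) ∂lam₁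
      = ∫⁻ x, f (fun k => (μ k).rnDeriv lam₂ x) ∂lam₂ := by
  have hl₁ : lam₁ ≪ lam₁ + lam₂ := Measure.absolutelyContinuous_of_le (Measure.le_add_right le_rfl)
  have hl₂ : lam₂ ≪ lam₁ + lam₂ := Measure.absolutelyContinuous_of_le (Measure.le_add_left le_rfl)
  rw [← half f hf hhom hf0 μ h₁ hl₁, ← half f hf hhom hf0 μ h₂ hl₂]
end
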